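/- arXiv:2007.13241 — 7 statements merged into one kernel-verified Lean document; each statement's English description precedes it below -/
import Mathlib

section
/- Let f be an approximately concave function, let k ≥ 2 be a cache size such that k+1 lies in the range of f, and let A be any deterministic cache replacement policy with cache size k, initialized with an arbitrary full cache of k pages. Then for every N there exists a page request sequence of length at least N that conforms to f and on which the fault rate of A is at least α_f(k) = (k−1)/(f⁻¹(k+1)−2). -/
/-- A page request sequence `σ` conforms to `f` if every window of `n` consecutive
requests contains requests for at most `f n` distinct pages. -/
def Conforms (f : ℕ → ℕ) (σ : List ℕ) : Prop :=
  ∀ w : List ℕ, w <:+: σ → w.toFinset.card ≤ f w.length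

/-- `f` is approximately concave: `f 1 = 1`, `f 2 = 2`, `f (n+1) ∈ {f n, f n + 1}`
for all `n ≥ 1`, and `m_y = |{n ≥ 1 : f n = y}|` is nondecreasing over attained values. -/
def ApproxConcave (f : ℕ → ℕ) : Prop :=
  f 1 = 1 ∧ f 2 = 2 ∧
    (∀ n, 1 ≤ n → f (n + 1) = f n ∨ f (n + 1) = f n + 1) ∧
    (∀ y z, (∃ n, 1 ≤ n ∧ f n = y) → (∃ n, 1 ≤ n ∧ f n = z) → y ≤ z →
      {n | 1 ≤ n ∧ f n = y}.encard ≤ {n | 1 ≤ n ∧ f n = z}.encard)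

/-- `fInv f y` is the smallest `x ≥ 1` with `f x = y`. -/
noncomputable def fInv (f : ℕ → ℕ) (y : ℕ) : ℕ := sInf {x | 1 ≤ x ∧ f x = y}

/-- `α_f(k) = (k - 1) / (f⁻¹(k+1) - 2)`. -/
noncomputable def alphaF (f : ℕ → ℕ) (k : ℕ) : ℝ :=
  ((k : ℝ) - 1) / ((fInv f (k + 1) : ℝ) - 2)

/-- One step of a generic deterministic cache replacement policy with cache size `k`:
`hist` is the list of requests seen so far (excluding the current request `p`), `C`
the current cache.  On a fault with a full cache, the page
`evict (hist ++ [p]) C` (a deterministic function of the requests seen so far) is evicted. -/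
def policyStep (k : ℕ) (evict : List ℕ → Finset ℕ → ℕ)
    (hist : List ℕ) (C : Finset ℕ) (p : ℕ) : Finset ℕ :=
  if p ∈ C then C
  else if C.card < k then insert p C
  else insert p (C.erase (evict (hist ++ [p]) C))

/-- The number of faults of the policy on a request sequence, given the history so far
and the current cache. -/
def policyFaults (k : ℕ) (evict : List ℕ → Finset ℕ → ℕ) :
    List ℕ → Finset ℕ → List ℕ → ℕ
  | _, _, [] => 0
  | hist, C, p :: rest =>
      (if p ∈ C then 0 else 1) +
        policyFaults k evict (hist ++ [p]) (policyStep k evict hist C p) rest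

/-!
Let `U` be `C₀` together with one fresh page. The adversary forces a fault at chosen times by
requesting a page of `U` missing from the (full) cache, and otherwise repeats its previous
request, which is a hit. Consecutive fault times are separated by gaps running cyclically
through the level sizes `m_2, …, m_k` of `f`; one period has length `f⁻¹(k+1) - 2` and
contains `k - 1` faults, which is the rate `α_f(k)`.

A window of length `n < f⁻¹(k+1)` holds at most its first page plus one page per later fault
time in it. Since the `m_y` are nondecreasing, `d` consecutive gaps add up to at least
`m_2 + ⋯ + m_{d+1} = f⁻¹(d+2) - 2`, so a window containing `d + 1` fault times has
`n ≥ f⁻¹(d+2)`, i.e. `f n ≥ d + 2`. Longer windows see at most the `k + 1 ≤ f n` pages of `U`.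
-/

open Finset

theorem fInv_spec {f : ℕ → ℕ} {j : ℕ} (h : ∃ n, 1 ≤ n ∧ f n = j) :
    1 ≤ fInv f j ∧ f (fInv f j) = j :=
  Nat.sInf_mem h

theorem fInv_le {f : ℕ → ℕ} {j n : ℕ} (hn : 1 ≤ n) (h : f n = j) : fInv f j ≤ n :=
  Nat.sInf_le ⟨hn, h⟩

/-- The paper's `m_y`; see `ApproxConcave.setOf_eq_Ico`. -/
noncomputable def levelSize (f : ℕ → ℕ) (y : ℕ) : ℕ := fInv f (y + 1) - fInv f y

namespace ApproxConcave

variable {f : ℕ → ℕ} (hf : ApproxConcave f)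
include hf

theorem le_of_le {a b : ℕ} (ha : 1 ≤ a) (hab : a ≤ b) : f a ≤ f b := by
  induction b, hab using Nat.le_induction with
  | base => rfl
  | succ n hn ih => rcases hf.2.2.1 n (ha.trans hn) with h | h <;> omega

theorem le_self {n : ℕ} (hn : 1 ≤ n) : f n ≤ n := by
  induction n, hn using Nat.le_induction with
  | base => exact hf.1.le
  | succ n hn ih => rcases hf.2.2.1 n hn with h | h <;> omega

theorem exists_eq_of_le {n j : ℕ} (hn : 1 ≤ n) (hj : 1 ≤ j) (hjn : j ≤ f n) :
    ∃ x, 1 ≤ x ∧ x ≤ n ∧ f x = j := by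
  induction n, hn using Nat.le_induction with
  | base => exact ⟨1, le_rfl, le_rfl, by have := hf.1; omega⟩
  | succ n hn ih =>
    by_cases hjf : j ≤ f n
    · obtain ⟨x, hx1, hxn, hfx⟩ := ih hjf
      exact ⟨x, hx1, hxn.trans n.le_succ, hfx⟩
    · exact ⟨n + 1, by omega, le_rfl, by rcases hf.2.2.1 n hn with h | h <;> omega⟩

theorem attains_of_le {j j' : ℕ} (hj : 1 ≤ j) (hjj' : j ≤ j') (h : ∃ n, 1 ≤ n ∧ f n = j') :
    ∃ n, 1 ≤ n ∧ f n = j := by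
  obtain ⟨n, hn, hfn⟩ := h
  obtain ⟨x, hx, -, hfx⟩ := hf.exists_eq_of_le hn hj (hfn ▸ hjj')
  exact ⟨x, hx, hfx⟩

theorem le_fInv {j : ℕ} (hatt : ∃ n, 1 ≤ n ∧ f n = j) : j ≤ fInv f j := by
  obtain ⟨h1, hfj⟩ := fInv_spec hatt
  simpa [hfj] using hf.le_self h1

theorem fInv_le_iff {j n : ℕ} (hatt : ∃ m, 1 ≤ m ∧ f m = j) (hj : 1 ≤ j) (hn : 1 ≤ n) :
    fInv f j ≤ n ↔ j ≤ f n := by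
  obtain ⟨hj1, hfj⟩ := fInv_spec hatt
  refine ⟨fun h => hfj ▸ hf.le_of_le hj1 h, fun h => ?_⟩
  obtain ⟨x, hx, hxn, hfx⟩ := hf.exists_eq_of_le hn hj h
  exact (fInv_le hx hfx).trans hxn

theorem fInv_lt_fInv_succ {j : ℕ} (hj : 1 ≤ j) (hatt : ∃ n, 1 ≤ n ∧ f n = j + 1) :
    fInv f j < fInv f (j + 1) := by
  obtain ⟨h1, hf1⟩ := fInv_spec hatt
  have hle : fInv f j ≤ fInv f (j + 1) :=
    (hf.fInv_le_iff (hf.attains_of_le hj j.le_succ hatt) hj h1).2 (by omega)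
  refine lt_of_le_of_ne hle fun heq => ?_
  have := (fInv_spec (hf.attains_of_le hj j.le_succ hatt)).2
  rw [heq] at this
  omega

theorem fInv_two : fInv f 2 = 2 := by
  have h1 : fInv f 1 < fInv f 2 := hf.fInv_lt_fInv_succ le_rfl ⟨2, by omega, hf.2.1⟩
  have h2 : fInv f 2 ≤ 2 := fInv_le (by omega) hf.2.1
  have h3 : 1 ≤ fInv f 1 := (fInv_spec ⟨1, le_rfl, hf.1⟩).1
  omega

theorem setOf_eq_Ico {y : ℕ} (hy : 1 ≤ y) (hatt : ∃ n, 1 ≤ n ∧ f n = y + 1) :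
    {n | 1 ≤ n ∧ f n = y} = Set.Ico (fInv f y) (fInv f (y + 1)) := by
  have hatt' := hf.attains_of_le hy y.le_succ hatt
  ext n
  simp only [Set.mem_ofPred_eq, Set.mem_Ico]
  constructor
  · rintro ⟨hn, rfl⟩
    exact ⟨fInv_le hn rfl, lt_of_not_ge fun h => by
      have := (hf.fInv_le_iff hatt (by omega) hn).1 h; omega⟩
  · rintro ⟨hyn, hny⟩
    have hn : 1 ≤ n := (fInv_spec hatt').1.trans hyn
    have h1 := (hf.fInv_le_iff hatt' hy hn).1 hyn
    have h2 := mt (hf.fInv_le_iff hatt (by omega) hn).2 (by omega)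
    exact ⟨hn, by omega⟩

theorem levelSize_le_levelSize {y z : ℕ} (hy : 1 ≤ y) (hyz : y ≤ z)
    (hatt : ∃ n, 1 ≤ n ∧ f n = z + 1) : levelSize f y ≤ levelSize f z := by
  have h := hf.2.2.2 y z (hf.attains_of_le hy (by omega) hatt)
    (hf.attains_of_le (hy.trans hyz) z.le_succ hatt) hyz
  rwa [hf.setOf_eq_Ico hy (hf.attains_of_le (by omega) (by omega) hatt),
    hf.setOf_eq_Ico (hy.trans hyz) hatt, ← coe_Ico, ← coe_Ico,
    Set.encard_coe_eq_coe_finsetCard, Set.encard_coe_eq_coe_finsetCard, Nat.card_Ico,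
    Nat.card_Ico, Nat.cast_le] at h

end ApproxConcave

theorem sum_range_card_le_sum_of_monotoneOn {h : ℕ → ℕ} {m : ℕ}
    (hh : MonotoneOn h (Set.Iio m)) {S : Finset ℕ} (hS : S ⊆ range m) :
    ∑ i ∈ range #S, h i ≤ ∑ i ∈ S, h i := by
  induction S using Finset.strongInduction with
  | H S ih =>
    rcases S.eq_empty_or_nonempty with rfl | hne
    · simp
    set M := S.max' hne
    have hM : M ∈ S := S.max'_mem hne
    have hcard : #(S.erase M) + 1 = #S := card_erase_add_one hM
    have hlen : #(S.erase M) ≤ M := by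
      simpa using card_le_card fun x hx => mem_range.2 (S.lt_max'_of_mem_erase_max' hne hx)
    calc ∑ i ∈ range #S, h i = ∑ i ∈ range #(S.erase M), h i + h #(S.erase M) := by
          rw [← hcard, sum_range_succ]
      _ ≤ ∑ i ∈ S.erase M, h i + h M := by
          refine add_le_add (ih _ (erase_ssubset hM) ((erase_subset M S).trans hS)) ?_
          have hMm : M < m := mem_range.1 (hS hM)
          exact hh (hlen.trans_lt hMm) hMm hlen
      _ = ∑ i ∈ S, h i := sum_erase_add S h hM

noncomputable def faultGap (f : ℕ → ℕ) (k i : ℕ) : ℕ := levelSize f (i % (k - 1) + 2)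

noncomputable def faultTime (f : ℕ → ℕ) (k i : ℕ) : ℕ :=
  ∑ s ∈ range i, faultGap f k s

section Schedule

variable {f : ℕ → ℕ} {k : ℕ} (hf : ApproxConcave f) (hk : 2 ≤ k)
  (hrange : ∃ n, 1 ≤ n ∧ f n = k + 1)
include hf hk hrange

theorem one_le_faultGap (i : ℕ) : 1 ≤ faultGap f k i := by
  have hi := Nat.mod_lt i (show 0 < k - 1 by omega)
  have := hf.fInv_lt_fInv_succ (j := i % (k - 1) + 2) (by omega)
    (hf.attains_of_le (by omega) (by omega) hrange)
  rw [faultGap, levelSize]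
  omega

theorem faultTime_strictMono : StrictMono (faultTime f k) :=
  strictMono_nat_of_lt_succ fun i => by
    have := one_le_faultGap hf hk hrange i
    simp only [faultTime, sum_range_succ]
    omega

omit hk in
theorem two_add_sum_faultGap {d : ℕ} (hd : d ≤ k - 1) :
    2 + ∑ s ∈ range d, faultGap f k s = fInv f (d + 2) := by
  induction d with
  | zero => simp [hf.fInv_two]
  | succ d ih =>
    have hlt := hf.fInv_lt_fInv_succ (j := d + 2) (by omega)
      (hf.attains_of_le (by omega) (by omega) hrange)
    rw [sum_range_succ, ← add_assoc, ih (by omega), faultGap, levelSize,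
      Nat.mod_eq_of_lt (by omega), show d + 1 + 2 = d + 2 + 1 from rfl]
    omega

theorem faultTime_mul (P : ℕ) : faultTime f k (P * (k - 1)) = P * (fInv f (k + 1) - 2) := by
  have hperiod := two_add_sum_faultGap hf hrange (le_refl (k - 1))
  rw [show k - 1 + 2 = k + 1 by omega] at hperiod
  induction P with
  | zero => simp [faultTime]
  | succ P ih =>
    have hshift : ∀ s, faultGap f k (P * (k - 1) + s) = faultGap f k s := fun s => by
      rw [faultGap, faultGap, mul_comm, Nat.mul_add_mod]
    rw [add_one_mul, add_one_mul, faultTime, sum_range_add, ← faultTime, ih]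
    simp only [hshift]
    omega

theorem sum_faultGap_le_sum_faultGap_add {d : ℕ} (hd : d ≤ k - 1) (i : ℕ) :
    ∑ s ∈ range d, faultGap f k s ≤ ∑ s ∈ range d, faultGap f k (i + s) := by
  have hmono : MonotoneOn (fun y => levelSize f (y + 2)) (Set.Iio (k - 1)) :=
    fun y _ z hz hyz => hf.levelSize_le_levelSize (by omega) (by omega)
      (hf.attains_of_le (by omega) (by simp at hz; omega) hrange)
  have hinj : Set.InjOn (fun s => (i + s) % (k - 1)) (range d) := fun s hs s' hs' hss =>
    (Nat.ModEq.add_left_cancel' i hss).eq_of_lt_of_lt (by simp at hs; omega)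
      (by simp at hs'; omega)
  have hsub : (range d).image (fun s => (i + s) % (k - 1)) ⊆ range (k - 1) := by
    simp only [image_subset_iff, mem_range]
    exact fun s _ => Nat.mod_lt _ (by omega)
  calc ∑ s ∈ range d, faultGap f k s = ∑ s ∈ range d, levelSize f (s + 2) :=
        sum_congr rfl fun s hs => by
          rw [faultGap, Nat.mod_eq_of_lt (by simp at hs; omega)]
    _ ≤ ∑ s ∈ range d, faultGap f k (i + s) := by
        simpa [faultGap, card_image_of_injOn hinj, sum_image hinj] using
          sum_range_card_le_sum_of_monotoneOn hmono hsub

theorem faultTime_add_fInv_le {d : ℕ} (hd : d ≤ k - 1) (i : ℕ) :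
    faultTime f k i + fInv f (d + 2) ≤ faultTime f k (i + d) + 2 := by
  rw [← two_add_sum_faultGap hf hrange hd, faultTime, faultTime, sum_range_add]
  have := sum_faultGap_le_sum_faultGap_add hf hk hrange hd i
  omega

theorem sub_add_two_le_of_faultTime_le {i₁ i₂ n : ℕ} (hi : i₁ ≤ i₂) (hn : 1 ≤ n)
    (hnk : n < fInv f (k + 1)) (hspan : faultTime f k i₂ + 2 ≤ faultTime f k i₁ + n) :
    i₂ - i₁ + 2 ≤ f n := by
  have hd : i₂ - i₁ + 2 ≤ k := by
    by_contra! hd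
    have h1 := faultTime_add_fInv_le hf hk hrange (le_refl (k - 1)) i₁
    have h2 := (faultTime_strictMono hf hk hrange).monotone (show i₁ + (k - 1) ≤ i₂ by omega)
    rw [show k - 1 + 2 = k + 1 by omega] at h1
    omega
  have h := faultTime_add_fInv_le hf hk hrange (show i₂ - i₁ ≤ k - 1 by omega) i₁
  rw [Nat.add_sub_cancel' hi] at h
  exact (hf.fInv_le_iff (hf.attains_of_le (by omega) (by omega) hrange) (by omega) hn).1
    (by omega)

theorem card_faultTime_window_add_one_le [DecidablePred (· ∈ Set.range (faultTime f k))]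
    (a : ℕ) {n : ℕ} (hn : 1 ≤ n) (hnk : n < fInv f (k + 1)) :
    #{s ∈ Ico (a + 1) (a + n) | s ∈ Set.range (faultTime f k)} + 1 ≤ f n := by
  set W := {s ∈ Ico (a + 1) (a + n) | s ∈ Set.range (faultTime f k)}
  rcases W.eq_empty_or_nonempty with hW | hW
  · simpa [hW, hf.1] using hf.le_of_le le_rfl hn
  obtain ⟨hmin, i₁, hi₁⟩ := mem_filter.1 (W.min'_mem hW)
  obtain ⟨hmax, i₂, hi₂⟩ := mem_filter.1 (W.max'_mem hW)
  have hmono : StrictMono (faultTime f k) := faultTime_strictMono hf hk hrange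
  have hsub : W ⊆ (Icc i₁ i₂).image (faultTime f k) := by
    intro s hs
    obtain ⟨-, i, rfl⟩ := mem_filter.1 hs
    exact mem_image_of_mem _ <|
      mem_Icc.2 ⟨hmono.le_iff_le.1 (hi₁ ▸ W.min'_le _ hs), hmono.le_iff_le.1 (hi₂ ▸ W.le_max' _ hs)⟩
  have hcard : #W ≤ i₂ + 1 - i₁ :=
    (card_le_card hsub).trans (card_image_le.trans (Nat.card_Icc i₁ i₂).le)
  have hi : i₁ ≤ i₂ := hmono.le_iff_le.1 (hi₁ ▸ hi₂ ▸ W.min'_le _ (W.max'_mem hW))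
  rw [mem_Ico] at hmin hmax
  have := sub_add_two_le_of_faultTime_le hf hk hrange hi hn hnk (by omega)
  omega

theorem mul_le_card_faultTime [DecidablePred (· ∈ Set.range (faultTime f k))] (N : ℕ) :
    N * (k - 1) ≤ #{s ∈ range (N * (fInv f (k + 1) - 2)) | s ∈ Set.range (faultTime f k)} := by
  have hinj := (faultTime_strictMono hf hk hrange).injective
  calc N * (k - 1) = #((range (N * (k - 1))).image (faultTime f k)) := by
        rw [card_image_of_injective _ hinj, card_range]
    _ ≤ _ := card_le_card fun s hs => by
        obtain ⟨i, hi, rfl⟩ := mem_image.1 hs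
        refine mem_filter.2 ⟨mem_range.2 ?_, i, rfl⟩
        rw [← faultTime_mul hf hk hrange]
        exact (faultTime_strictMono hf hk hrange) (mem_range.1 hi)

end Schedule

section Policy

variable {k : ℕ} {evict : List ℕ → Finset ℕ → ℕ} {hist : List ℕ} {C : Finset ℕ} {p : ℕ}

theorem mem_policyStep : p ∈ policyStep k evict hist C p := by
  unfold policyStep
  split_ifs <;> simp [*]

theorem policyStep_subset_insert : policyStep k evict hist C p ⊆ insert p C := by
  unfold policyStep
  split_ifs
  · exact subset_insert p C
  · rfl
  · exact insert_subset_insert p (erase_subset _ C)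

theorem card_policyStep (hvalid : ∀ hist C, C.Nonempty → evict hist C ∈ C) (hk : 1 ≤ k)
    (hC : #C = k) : #(policyStep k evict hist C p) = k := by
  unfold policyStep
  split_ifs with hp
  · exact hC
  · omega
  · have hev := hvalid (hist ++ [p]) C (card_pos.1 (by omega))
    rw [card_insert_of_notMem (fun h => hp (mem_of_mem_erase h)), card_erase_of_mem hev]
    omega

end Policy

noncomputable def pickOutside (U C : Finset ℕ) : ℕ := sInf (↑(U \ C) : Set ℕ)

theorem pickOutside_mem {U C : Finset ℕ} (h : #C < #U) : pickOutside U C ∈ U \ C := by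
  obtain ⟨e, heU, heC⟩ := exists_mem_notMem_of_card_lt_card h
  exact Nat.sInf_mem (s := ↑(U \ C)) ⟨e, mem_sdiff.2 ⟨heU, heC⟩⟩

section Adversary

variable {k : ℕ} {evict : List ℕ → Finset ℕ → ℕ} {U : Finset ℕ} {new : ℕ → Prop}
  [DecidablePred new]

/-- The next `n` requests, from time `t` on, against the policy with history `hist` and cache
`C`, the previous request being `last`. -/
noncomputable def adversary (k : ℕ) (evict : List ℕ → Finset ℕ → ℕ) (U : Finset ℕ)
    (new : ℕ → Prop) [DecidablePred new] :
    List ℕ → Finset ℕ → ℕ → ℕ → ℕ → List ℕ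
  | _, _, _, _, 0 => []
  | hist, C, last, t, n + 1 =>
    let p := if new t then pickOutside U C else last
    p :: adversary k evict U new (hist ++ [p]) (policyStep k evict hist C p) p (t + 1) n

theorem length_adversary (hist : List ℕ) (C : Finset ℕ) (last t n : ℕ) :
    (adversary k evict U new hist C last t n).length = n := by
  induction n generalizing hist C last t with
  | zero => rfl
  | succ n ih => simp [adversary, ih]

theorem adversary_step (hvalid : ∀ hist C, C.Nonempty → evict hist C ∈ C) (hk : 1 ≤ k)
    (hU : #U = k + 1) {hist : List ℕ} {C : Finset ℕ} {last t : ℕ} (hCU : C ⊆ U)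
    (hC : #C = k) (hlast : ¬ new t → last ∈ C) :
    let p := if new t then pickOutside U C else last
    (p ∈ C ↔ ¬ new t) ∧ p ∈ U ∧ policyStep k evict hist C p ⊆ U ∧
      #(policyStep k evict hist C p) = k := by
  intro p
  have hpC : p ∈ C ↔ ¬ new t := by
    by_cases ht : new t
    · simpa [p, ht] using (mem_sdiff.1 (pickOutside_mem (U := U) (C := C) (by omega))).2
    · simpa [p, ht] using hlast ht
  have hpU : p ∈ U := by
    by_cases ht : new t
    · simpa [p, ht] using (mem_sdiff.1 (pickOutside_mem (U := U) (C := C) (by omega))).1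
    · exact hCU (hpC.2 ht)
  exact ⟨hpC, hpU, policyStep_subset_insert.trans (insert_subset hpU hCU),
    card_policyStep hvalid hk hC⟩

theorem policyFaults_adversary (hvalid : ∀ hist C, C.Nonempty → evict hist C ∈ C)
    (hk : 1 ≤ k) (hU : #U = k + 1) (n : ℕ) {hist : List ℕ} {C : Finset ℕ} {last t : ℕ}
    (hCU : C ⊆ U) (hC : #C = k) (hlast : ¬ new t → last ∈ C) :
    policyFaults k evict hist C (adversary k evict U new hist C last t n) =
      #{s ∈ Ico t (t + n) | new s} := by
  induction n generalizing hist C last t with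
  | zero => simp [adversary, policyFaults]
  | succ n ih =>
    obtain ⟨hpC, -, hCU', hC'⟩ := adversary_step hvalid hk hU (hist := hist) hCU hC hlast
    have hIco : Ico t (t + (n + 1)) = insert t (Ico (t + 1) (t + 1 + n)) := by
      rw [insert_Ico_add_one_left_eq_Ico (by omega), add_right_comm, add_assoc]
    rw [adversary, policyFaults, ih hCU' hC' fun _ => mem_policyStep, hIco, filter_insert]
    by_cases ht : new t
    · rw [if_neg (hpC.not.2 (not_not.2 ht)), if_pos ht, card_insert_of_notMem (by simp)]
      omega
    · rw [if_pos (hpC.2 ht), if_neg ht]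
      omega

theorem adversary_subset (hvalid : ∀ hist C, C.Nonempty → evict hist C ∈ C)
    (hk : 1 ≤ k) (hU : #U = k + 1) (n : ℕ) {hist : List ℕ} {C : Finset ℕ} {last t : ℕ}
    (hCU : C ⊆ U) (hC : #C = k) (hlast : ¬ new t → last ∈ C) :
    ∀ x ∈ adversary k evict U new hist C last t n, x ∈ U := by
  induction n generalizing hist C last t with
  | zero => simp [adversary]
  | succ n ih =>
    obtain ⟨-, hpU, hCU', hC'⟩ := adversary_step hvalid hk hU (hist := hist) hCU hC hlast
    simp only [adversary, List.mem_cons, forall_eq_or_imp]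
    exact ⟨hpU, ih hCU' hC' fun _ => mem_policyStep⟩

theorem drop_adversary (a : ℕ) {n : ℕ} (hist : List ℕ) (C : Finset ℕ) (last t : ℕ) :
    ∃ hist' C' last', (adversary k evict U new hist C last t n).drop a =
      adversary k evict U new hist' C' last' (t + a) (n - a) := by
  induction a generalizing n hist C last t with
  | zero => exact ⟨hist, C, last, rfl⟩
  | succ a ih =>
    cases n with
    | zero => exact ⟨hist, C, last, by simp [adversary]⟩
    | succ n =>
      rw [adversary, List.drop_succ_cons, Nat.add_sub_add_right, ← add_comm 1 a, ← add_assoc]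
      exact ih _ _ _ _

/-- Between two `new` times the adversary repeats one page. -/
theorem card_toFinset_cons_take_adversary_le (n : ℕ) (hist : List ℕ) (C : Finset ℕ)
    (last t j : ℕ) :
    #(last :: (adversary k evict U new hist C last t n).take j).toFinset ≤
      1 + #{s ∈ Ico t (t + j) | new s} := by
  induction n generalizing hist C last t j with
  | zero => simp [adversary]
  | succ n ih =>
    cases j with
    | zero => simp
    | succ j =>
      have hIco : Ico t (t + (j + 1)) = insert t (Ico (t + 1) (t + 1 + j)) := by
        rw [insert_Ico_add_one_left_eq_Ico (by omega), add_right_comm, add_assoc]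
      rw [adversary, List.take_succ_cons, hIco, filter_insert]
      set p := if new t then pickOutside U C else last
      have hrest := ih (hist ++ [p]) (policyStep k evict hist C p) p (t + 1) j
      rw [List.toFinset_cons]
      by_cases ht : new t
      · rw [if_pos ht, card_insert_of_notMem (s := {s ∈ Ico (t + 1) (t + 1 + j) | new s}) (by simp)]
        refine (card_insert_le _ _).trans ?_
        omega
      · rw [if_neg ht, show last = p by simp [p, ht], insert_eq_of_mem (by simp)]
        exact hrest

theorem exists_card_toFinset_le_of_isInfix_adversary {w : List ℕ} (hw₀ : w ≠ [])
    {hist : List ℕ} {C : Finset ℕ} {last t n : ℕ}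
    (hw : w <:+: adversary k evict U new hist C last t n) :
    ∃ a, #w.toFinset ≤ 1 + #{s ∈ Ico (a + 1) (a + w.length) | new s} := by
  obtain ⟨s, u, hsu⟩ := hw
  obtain ⟨hist', C', last', hdrop⟩ := drop_adversary (k := k) (evict := evict) (U := U)
    (new := new) s.length hist C last t (n := n)
  have hw : w = (adversary k evict U new hist' C' last' (t + s.length) (n - s.length)).take
      w.length := by
    rw [← hdrop, ← hsu, List.append_assoc, List.drop_left, List.take_left]
  obtain ⟨m, hm⟩ : ∃ m, n - s.length = m + 1 := by
    refine Nat.exists_eq_add_one.2 (Nat.pos_of_ne_zero fun h => hw₀ ?_)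
    rw [hw, h, adversary, List.take_nil]
  obtain ⟨j, hj⟩ : ∃ j, w.length = j + 1 := Nat.exists_eq_add_one.2 (List.length_pos_iff.2 hw₀)
  refine ⟨t + s.length, ?_⟩
  rw [hm, hj, adversary, List.take_succ_cons] at hw
  rw [hj, hw]
  refine (card_toFinset_cons_take_adversary_le m _ _ _ _ j).trans (le_of_eq ?_)
  rw [show t + s.length + 1 + j = t + s.length + (j + 1) by omega]

end Adversary

theorem conforms_adversary_faultTime {f : ℕ → ℕ} {k : ℕ} {evict : List ℕ → Finset ℕ → ℕ}
    {U C₀ : Finset ℕ} (hf : ApproxConcave f) (hk : 2 ≤ k) (hrange : ∃ n, 1 ≤ n ∧ f n = k + 1)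
    (hvalid : ∀ hist C, C.Nonempty → evict hist C ∈ C)
    [DecidablePred (· ∈ Set.range (faultTime f k))] (hU : #U = k + 1) (hCU : C₀ ⊆ U)
    (hC₀ : #C₀ = k) (T : ℕ) :
    Conforms f (adversary k evict U (· ∈ Set.range (faultTime f k)) [] C₀ 0 0 T) := by
  intro w hw
  rcases eq_or_ne w [] with rfl | hw₀
  · simp
  have hlen : 1 ≤ w.length := List.length_pos_iff.2 hw₀
  rcases lt_or_ge w.length (fInv f (k + 1)) with hshort | hlong
  · obtain ⟨a, ha⟩ := exists_card_toFinset_le_of_isInfix_adversary hw₀ hw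
    have := card_faultTime_window_add_one_le hf hk hrange a hlen hshort
    omega
  · have hsub : w.toFinset ⊆ U := fun x hx =>
      adversary_subset hvalid (by omega) hU T hCU hC₀ (fun h => absurd ⟨0, rfl⟩ h) x
        (hw.subset (List.mem_toFinset.1 hx))
    calc #w.toFinset ≤ #U := card_le_card hsub
      _ = k + 1 := hU
      _ ≤ f w.length := (hf.fInv_le_iff hrange (by omega) hlen).1 hlong

theorem alphaF_mul_cast {f : ℕ → ℕ} {k : ℕ} (hk : 1 ≤ k) (hm : 2 < fInv f (k + 1)) (N : ℕ) :
    alphaF f k * ((N * (fInv f (k + 1) - 2) : ℕ) : ℝ) = ((N * (k - 1) : ℕ) : ℝ) := by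
  have hm' : (fInv f (k + 1) : ℝ) - 2 ≠ 0 := (sub_pos.2 (by exact_mod_cast hm)).ne'
  rw [alphaF, Nat.cast_mul, Nat.cast_mul, Nat.cast_sub hm.le, Nat.cast_sub hk]
  field_simp
  push_cast
  ring

/-- **Theorem 1.1(a)** For every approximately concave `f`, cache size `k ≥ 2` with `k+1`
in the range of `f`, and deterministic cache replacement policy starting from an arbitrary
full cache of `k` pages, there are arbitrarily long page request sequences conforming to
`f` on which the policy's fault rate is at least `α_f(k)`. -/
theorem stmt0 (f : ℕ → ℕ) (hf : ApproxConcave f) (k : ℕ) (hk : 2 ≤ k)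
    (hrange : ∃ n, 1 ≤ n ∧ f n = k + 1)
    (evict : List ℕ → Finset ℕ → ℕ)
    (hvalid : ∀ hist C, C.Nonempty → evict hist C ∈ C)
    (C₀ : Finset ℕ) (hC₀ : C₀.card = k) (N : ℕ) :
    ∃ σ : List ℕ, N ≤ σ.length ∧ Conforms f σ ∧
      alphaF f k * (σ.length : ℝ) ≤ (policyFaults k evict [] C₀ σ : ℝ) := by
  classical
  obtain ⟨x, hx⟩ := Infinite.exists_notMem_finset C₀
  have hU : #(insert x C₀) = k + 1 := by rw [card_insert_of_notMem hx, hC₀]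
  have hm := hf.le_fInv hrange
  refine ⟨adversary k evict (insert x C₀) (· ∈ Set.range (faultTime f k)) [] C₀ 0 0
      (N * (fInv f (k + 1) - 2)), ?_,
    conforms_adversary_faultTime hf hk hrange hvalid hU (subset_insert x C₀) hC₀ _, ?_⟩
  · rw [length_adversary]
    exact Nat.le_mul_of_pos_right N (by omega)
  · rw [length_adversary, policyFaults_adversary hvalid (by omega) hU _ (subset_insert x C₀) hC₀
      (fun h => absurd ⟨0, rfl⟩ h), zero_add, ← range_eq_Ico, alphaF_mul_cast (by omega) (by omega)]
    exact_mod_cast mul_le_card_faultTime hf hk hrange N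
end

section
/- Let f be an approximately concave function and let k ≥ 2 be a cache size such that k+1 lies in the range of f. Then there exists a constant c, depending only on f and k, such that for every page request sequence σ of length T conforming to f, the number of faults of the LRU policy with cache size k (starting from an empty cache) on σ is at most α_f(k)·T + c; in particular, LRU's fault rate on σ is at most α_f(k) = (k−1)/(f⁻¹(k+1)−2) plus an additive term that tends to 0 as T → ∞. -/
/-- One step of the LRU policy with cache size `k`.  The cache is maintained as a list
of (distinct) pages ordered by recency of their most recent request (most recent first);
on a request for `p`, page `p` is moved to the front, and if the cache overflows, the
page whose most recent request lies furthest in the past (the last list entry) is evicted. -/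
def lruStep (k : ℕ) (L : List ℕ) (p : ℕ) : List ℕ := (p :: L.erase p).take k

/-- The number of faults of the LRU policy with cache size `k` on a request sequence,
starting from the cache `L`.  A request is a fault when the page is not in the cache. -/
def lruFaults (k : ℕ) : List ℕ → List ℕ → ℕ
  | _, [] => 0
  | L, p :: rest => (if p ∈ L then 0 else 1) + lruFaults k (lruStep k L p) rest

/-!
`lruStep k L p` is `(moveToFront L p).take k`, so LRU's cache always begins with the top of the
move-to-front stack; in particular a page requested within a stretch of requests containing at
most `k` distinct pages is still cached at the end of that stretch. Hence, if the `l` requests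
following a request for `q` together with `q` involve at most `k` pages, LRU faults on them only
at first occurrences of pages other than `q`: at most `k - 1` times. With
`l = f⁻¹(k+1) - 2`, every window of `l + 1` requests of a sequence conforming to `f` has at most
`k` distinct pages, so cutting the sequence after its first request into chunks of `l` requests
bounds the faults by `k + (k - 1)⌊T / l⌋ ≤ α_f(k) T + k`.
-/

section MoveToFront

variable {α : Type*} [DecidableEq α]

def moveToFront (R : List α) (p : α) : List α := p :: R.erase p

theorem length_le_length_moveToFront (R : List α) (p : α) :
    R.length ≤ (moveToFront R p).length := by
  rw [moveToFront, List.length_cons, List.length_erase]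
  split <;> omega

theorem length_le_length_foldl_moveToFront (s R : List α) :
    R.length ≤ (s.foldl moveToFront R).length := by
  induction s generalizing R with
  | nil => rfl
  | cons p s ih => exact (length_le_length_moveToFront R p).trans (ih _)

theorem mem_foldl_moveToFront {s R : List α} {p : α} :
    p ∈ s.foldl moveToFront R ↔ p ∈ R ∨ p ∈ s := by
  induction s generalizing R with
  | nil => simp
  | cons q s ih =>
    rw [List.foldl_cons, ih, moveToFront]
    by_cases hpq : p = q
    · simp [hpq]
    · simp [hpq, List.mem_erase_of_ne]

theorem nodup_foldl_moveToFront (s : List α) {R : List α} (hR : R.Nodup) :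
    (s.foldl moveToFront R).Nodup := by
  induction s generalizing R with
  | nil => exact hR
  | cons q s ih => exact ih ((hR.erase q).cons hR.not_mem_erase)

theorem length_foldl_moveToFront_nil (s : List α) :
    (s.foldl moveToFront []).length = s.toFinset.card := by
  rw [← List.toFinset_card_of_nodup (nodup_foldl_moveToFront s List.nodup_nil)]
  congr 1
  ext p
  simp [mem_foldl_moveToFront]

end MoveToFront

theorem moveToFront_prefix_lruStep {k : ℕ} {R C : List ℕ} (p : ℕ) (h : R <+: C)
    (hk : (moveToFront R p).length ≤ k) : moveToFront R p <+: lruStep k C p :=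
  List.prefix_take_iff.mpr ⟨(List.prefix_cons_inj p).mpr (h.erase p), hk⟩

theorem foldl_moveToFront_prefix_foldl_lruStep {k : ℕ} (s : List ℕ) {R C : List ℕ}
    (h : R <+: C) (hk : (s.foldl moveToFront R).length ≤ k) :
    s.foldl moveToFront R <+: s.foldl (lruStep k) C := by
  induction s generalizing R C with
  | nil => exact h
  | cons p s ih =>
    refine ih (moveToFront_prefix_lruStep p h ?_) hk
    exact (length_le_length_foldl_moveToFront s _).trans hk

theorem mem_foldl_lruStep_of_mem {k : ℕ} {s : List ℕ} {p : ℕ} (C : List ℕ) (hp : p ∈ s)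
    (hs : s.toFinset.card ≤ k) : p ∈ s.foldl (lruStep k) C := by
  have hstack := foldl_moveToFront_prefix_foldl_lruStep (k := k) s (List.nil_prefix (l := C))
    (by rwa [length_foldl_moveToFront_nil])
  exact hstack.subset (mem_foldl_moveToFront.mpr (Or.inr hp))

theorem lruFaults_append (k : ℕ) (C u v : List ℕ) :
    lruFaults k C (u ++ v) = lruFaults k C u + lruFaults k (u.foldl (lruStep k) C) v := by
  induction u generalizing C with
  | nil => simp [lruFaults]
  | cons q u ih =>
    simp only [List.cons_append, lruFaults, List.foldl_cons, ih]
    omega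

theorem lruFaults_foldl_le_card_sdiff (k : ℕ) (C h w : List ℕ)
    (hk : (h ++ w).toFinset.card ≤ k) :
    lruFaults k (h.foldl (lruStep k) C) w ≤ (w.toFinset \ h.toFinset).card := by
  induction w generalizing h with
  | nil => simp [lruFaults]
  | cons p w ih =>
    have ih' := ih (h ++ [p]) (by simpa using hk)
    rw [List.foldl_append, List.foldl_cons, List.foldl_nil] at ih'
    have hshrink : w.toFinset \ (h ++ [p]).toFinset ⊆ (p :: w).toFinset \ h.toFinset := by
      intro x
      simp only [Finset.mem_sdiff, List.mem_toFinset, List.mem_append, List.mem_cons]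
      tauto
    rw [lruFaults]
    by_cases hph : p ∈ h
    · have hh : h.toFinset.card ≤ k := by
        refine (Finset.card_le_card ?_).trans hk
        rw [List.toFinset_append]
        exact Finset.subset_union_left
      rw [if_pos (mem_foldl_lruStep_of_mem C hph hh), zero_add]
      exact ih'.trans (Finset.card_le_card hshrink)
    · have hfault : (if p ∈ h.foldl (lruStep k) C then 0 else 1) ≤ 1 := by split <;> omega
      have hins : insert p (w.toFinset \ (h ++ [p]).toFinset) ⊆ (p :: w).toFinset \ h.toFinset :=
        Finset.insert_subset (by simp [hph]) hshrink
      have hcard := Finset.card_le_card hins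
      rw [Finset.card_insert_of_notMem (by simp)] at hcard
      omega

theorem lruFaults_lruStep_le (k : ℕ) (C : List ℕ) (q : ℕ) (w : List ℕ)
    (hk : (q :: w).toFinset.card ≤ k) : lruFaults k (lruStep k C q) w ≤ k - 1 := by
  have hbound := lruFaults_foldl_le_card_sdiff k C [q] w hk
  have hsub : w.toFinset \ [q].toFinset ⊆ (q :: w).toFinset.erase q := by
    intro x; simp; tauto
  have hcard := Finset.card_le_card hsub
  rw [Finset.card_erase_of_mem (by simp)] at hcard
  simp only [List.foldl_cons, List.foldl_nil] at hbound
  omega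

theorem lruFaults_lruStep_le_of_windows {k l : ℕ} (hl : 0 < l) (C : List ℕ) (q : ℕ)
    (v : List ℕ) (hwin : ∀ w, w <:+: q :: v → w.length ≤ l + 1 → w.toFinset.card ≤ k) :
    lruFaults k (lruStep k C q) v ≤ (k - 1) * (v.length / l + 1) := by
  induction hn : v.length using Nat.strong_induction_on generalizing C q v with
  | _ n ih =>
  rcases Nat.lt_or_ge n l with hshort | hlong
  · calc lruFaults k (lruStep k C q) v ≤ k - 1 :=
          lruFaults_lruStep_le k C q v (hwin _ (List.infix_refl _) (by simp; omega))
      _ ≤ (k - 1) * (n / l + 1) := Nat.le_mul_of_pos_right _ (Nat.succ_pos _)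
  obtain ⟨u, q', rest, rfl, hu⟩ : ∃ u q' rest, v = u ++ q' :: rest ∧ u.length + 1 = l :=
    ⟨v.take (l - 1), v[l - 1], v.drop (l - 1 + 1),
      by rw [← List.drop_eq_getElem_cons (by omega), List.take_append_drop], by simp; omega⟩
  have hchunk : lruFaults k (lruStep k C q) (u ++ [q']) ≤ k - 1 :=
    lruFaults_lruStep_le k C q _ (hwin _ ⟨[], rest, by simp⟩ (by simp; omega))
  have hrest : lruFaults k (lruStep k (u.foldl (lruStep k) (lruStep k C q)) q') rest
      ≤ (k - 1) * (rest.length / l + 1) :=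
    ih rest.length (by simp at hn; omega) _ q' rest
      (fun w hw => hwin w (hw.trans ⟨q :: u, [], by simp⟩)) rfl
  have hlen : n / l = rest.length / l + 1 := by
    rw [← Nat.add_div_right _ hl]
    simp at hn
    congr 1
    omega
  rw [List.append_cons, lruFaults_append, List.foldl_append, List.foldl_cons, List.foldl_nil,
    hlen]
  calc _ ≤ (k - 1) + (k - 1) * (rest.length / l + 1) := Nat.add_le_add hchunk hrest
    _ = (k - 1) * (rest.length / l + 1 + 1) := by ring

theorem lruFaults_le_of_windows {k l : ℕ} (hl : 0 < l) (C σ : List ℕ)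
    (hwin : ∀ w, w <:+: σ → w.length ≤ l + 1 → w.toFinset.card ≤ k) :
    lruFaults k C σ ≤ k + (k - 1) * (σ.length / l) := by
  cases σ with
  | nil => simp [lruFaults]
  | cons q v =>
    have hk : 1 ≤ k := by simpa using hwin [q] ⟨[], v, rfl⟩ (by simp)
    have hfault : (if q ∈ C then 0 else 1) ≤ 1 := by split <;> omega
    have hrest := lruFaults_lruStep_le_of_windows hl C q v hwin
    have hdiv : (k - 1) * (v.length / l) ≤ (k - 1) * ((v.length + 1) / l) :=
      Nat.mul_le_mul_left _ (Nat.div_le_div_right (Nat.le_add_right _ 1))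
    rw [lruFaults, List.length_cons]
    rw [mul_add] at hrest
    omega

theorem ApproxConcave.le_of_lt_fInv {f : ℕ → ℕ} (hf : ApproxConcave f) {k n : ℕ} (hk : 1 ≤ k)
    (hn : 1 ≤ n) (hlt : n < fInv f (k + 1)) : f n ≤ k := by
  induction n, hn using Nat.le_induction with
  | base => rw [hf.1]; exact hk
  | succ n hn ih =>
    have hne : f (n + 1) ≠ k + 1 := fun h =>
      (Nat.sInf_le (show n + 1 ∈ {x | 1 ≤ x ∧ f x = k + 1} from ⟨by omega, h⟩)).not_gt hlt
    rcases hf.2.2.1 n hn with h | h <;> omega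

theorem ApproxConcave.three_le_fInv {f : ℕ → ℕ} (hf : ApproxConcave f) {k : ℕ} (hk : 2 ≤ k)
    (hrange : ∃ n, 1 ≤ n ∧ f n = k + 1) : 3 ≤ fInv f (k + 1) := by
  obtain ⟨hpos, hval⟩ : 1 ≤ fInv f (k + 1) ∧ f (fInv f (k + 1)) = k + 1 := Nat.sInf_mem hrange
  by_contra! hsmall
  interval_cases h : fInv f (k + 1)
  · rw [hf.1] at hval; omega
  · rw [hf.2.1] at hval; omega

theorem Conforms.card_le_of_length_le {f : ℕ → ℕ} {σ : List ℕ} (hσ : Conforms f σ) {k l : ℕ}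
    (hfl : ∀ n, 1 ≤ n → n ≤ l → f n ≤ k) (w : List ℕ) (hw : w <:+: σ) (hwl : w.length ≤ l) :
    w.toFinset.card ≤ k := by
  rcases eq_or_ne w [] with rfl | hne
  · simp
  · exact (hσ w hw).trans (hfl _ (List.length_pos_iff.mpr hne) hwl)

/-- **Theorem 1.1(b)** For every approximately concave `f` and cache size `k ≥ 2` with
`k+1` in the range of `f`, there is a constant `c` (depending only on `f` and `k`) such
that on every request sequence of length `T` conforming to `f`, LRU (from an empty cache)
incurs at most `α_f(k)·T + c` faults; hence its fault rate is at most `α_f(k)` plus an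
additive term that vanishes as `T → ∞`. -/
theorem stmt1 (f : ℕ → ℕ) (hf : ApproxConcave f) (k : ℕ) (hk : 2 ≤ k)
    (hrange : ∃ n, 1 ≤ n ∧ f n = k + 1) :
    ∃ c : ℝ, ∀ σ : List ℕ, Conforms f σ →
      (lruFaults k [] σ : ℝ) ≤ alphaF f k * (σ.length : ℝ) + c := by
  have hm := hf.three_le_fInv hk hrange
  set l := fInv f (k + 1) - 2 with hl
  have hα : alphaF f k = ((k : ℝ) - 1) / l := by
    rw [alphaF, hl, Nat.cast_sub (by omega)]
    norm_num
  refine ⟨k, fun σ hσ => ?_⟩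
  have hfaults : lruFaults k [] σ ≤ k + (k - 1) * (σ.length / l) :=
    lruFaults_le_of_windows (by omega) [] σ
      (hσ.card_le_of_length_le fun n hn hnl => hf.le_of_lt_fInv (by omega) hn (by omega))
  have hlpos : (0 : ℝ) < l := by exact_mod_cast (show 0 < l by omega)
  calc (lruFaults k [] σ : ℝ) ≤ k + ((k : ℝ) - 1) * ((σ.length / l : ℕ) : ℝ) := by
        rw [← Nat.cast_one, ← Nat.cast_sub (by omega)]
        exact_mod_cast hfaults
    _ ≤ k + ((k : ℝ) - 1) * (σ.length / l) := by
        gcongr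
        · linarith [(show (2 : ℝ) ≤ k by exact_mod_cast hk)]
        · exact Nat.cast_div_le
    _ = alphaF f k * σ.length + k := by
        rw [hα]
        field_simp
        ring
end

section
/- Let σ be a page request sequence processed by the LRU policy with cache size k ≥ 2 starting from an empty cache. Suppose LRU faults at times t_1 < t_2 < ⋯ < t_k and at no other time in the interval [t_1, t_k], that t_1 ≥ 2, and that at least k distinct pages are requested before time t_1 (so LRU's cache is full at time t_1). Then the requests σ_{t_1 − 1}, σ_{t_1}, σ_{t_1 + 1}, …, σ_{t_k} are for at least k+1 distinct pages. -/
/-- The LRU cache (with cache size `k`, starting from an empty cache) just before the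
request at (0-based) time `t` of the request sequence `σ`. -/
def lruCache (k : ℕ) (σ : ℕ → ℕ) : ℕ → List ℕ
  | 0 => []
  | t + 1 => lruStep k (lruCache k σ t) (σ t)

lemma lruCache_nodup (k : ℕ) (σ : ℕ → ℕ) : ∀ s, (lruCache k σ s).Nodup
  | 0 => List.nodup_nil
  | s + 1 => by
    have ih := lruCache_nodup k σ s
    show ((σ s :: (lruCache k σ s).erase (σ s)).take k).Nodup
    refine (List.take_sublist _ _).nodup (List.nodup_cons.mpr ⟨?_, ih.erase _⟩)
    intro h
    exact ((ih.mem_erase_iff.mp h).1) rfl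

lemma lruCache_length_le (k : ℕ) (σ : ℕ → ℕ) : ∀ s, (lruCache k σ s).length ≤ k
  | 0 => Nat.zero_le k
  | s + 1 => by
    show ((σ s :: (lruCache k σ s).erase (σ s)).take k).length ≤ k
    simp [List.length_take]

lemma lruCache_succ (k : ℕ) (hk : 1 ≤ k) (σ : ℕ → ℕ) (m : ℕ) :
    lruCache k σ (m + 1) = σ m :: ((lruCache k σ m).erase (σ m)).take (k - 1) := by
  obtain ⟨k', rfl⟩ : ∃ k', k = k' + 1 := ⟨k - 1, by omega⟩
  show ((σ m :: (lruCache (k'+1) σ m).erase (σ m)).take (k'+1)) = _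
  simp [List.take_succ_cons]

/-- Key lemma: if `p` is at the front of the cache at time `a` and not in the cache at
time `b ≥ a`, then at least `k` pages other than `p` are requested in `[a, b)`. -/
lemma lru_key (k : ℕ) (hk : 1 ≤ k) (σ : ℕ → ℕ) (p a b : ℕ) (hab : a ≤ b)
    (ha : ∃ l, lruCache k σ a = p :: l)
    (hb : p ∉ lruCache k σ b) :
    k ≤ (((Finset.Ico a b).image σ).erase p).card := by
  set E : ℕ → Finset ℕ := fun s => ((Finset.Ico a s).image σ).erase p with hE
  have hmonoE : ∀ ⦃s s'⦄, s ≤ s' → E s ⊆ E s' := by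
    intro s s' h
    exact Finset.erase_subset_erase _ (Finset.image_subset_image
      (Finset.Ico_subset_Ico le_rfl h))
  have main : ∀ s, a ≤ s →
      (∃ l₁ l₂, lruCache k σ s = l₁ ++ p :: l₂ ∧ ∀ q ∈ l₁, q ∈ E s) ∨ k ≤ (E s).card := by
    intro s hs
    induction s, hs using Nat.le_induction with
    | base =>
      obtain ⟨l, hl⟩ := ha
      exact Or.inl ⟨[], l, by simpa using hl, by simp⟩
    | succ s hs ih =>
      rcases ih with ⟨l₁, l₂, hc, hsub⟩ | hcard
      · -- p in cache at time s with prefix l₁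
        have hnd : (l₁ ++ p :: l₂).Nodup := hc ▸ lruCache_nodup k σ s
        have hlen : l₁.length + 1 + l₂.length ≤ k := by
          have := lruCache_length_le k σ s
          rw [hc] at this; simpa [Nat.add_assoc, Nat.add_comm, Nat.add_left_comm] using this
        have hcache : lruCache k σ (s + 1)
            = ((σ s) :: (l₁ ++ p :: l₂).erase (σ s)).take k := by
          show lruStep k (lruCache k σ s) (σ s) = _
          rw [lruStep, hc]
        have hσE : σ s ∈ E (s + 1) → True := fun _ => trivial
        have hσmem : σ s ≠ p → σ s ∈ E (s + 1) := by
          intro hne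
          refine Finset.mem_erase.mpr ⟨hne, Finset.mem_image.mpr ⟨s, ?_, rfl⟩⟩
          simp [Finset.mem_Ico]; omega
        by_cases hps : σ s = p
        · -- p requested: moves to front
          left
          subst hps
          refine ⟨[], ((l₁ ++ σ s :: l₂).erase (σ s)).take (k - 1), ?_, by simp⟩
          rw [hcache]
          obtain ⟨k', rfl⟩ : ∃ k', k = k' + 1 := ⟨k - 1, by omega⟩
          simp [List.take_succ_cons]
        · -- σ s ≠ p
          -- helper to conclude the "p kept" case with prefix A
          have keep : ∀ A B : List ℕ, (l₁ ++ p :: l₂).erase (σ s) = A ++ p :: B →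
              A.length + 1 < k → (∀ q ∈ A, q ∈ E (s + 1)) →
              (∃ l₁' l₂', lruCache k σ (s+1) = l₁' ++ p :: l₂' ∧ ∀ q ∈ l₁', q ∈ E (s+1)) := by
            intro A B hAB hAlt hAsub
            obtain ⟨d, hd⟩ : ∃ d, k - (σ s :: A).length = d + 1 :=
              ⟨k - (σ s :: A).length - 1, by simp only [List.length_cons]; omega⟩
            refine ⟨σ s :: A, B.take d, ?_, ?_⟩
            · rw [hcache, hAB]
              rw [show ((σ s) :: (A ++ p :: B)) = (σ s :: A) ++ p :: B from rfl,
                List.take_append]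
              rw [List.take_of_length_le (by simp only [List.length_cons]; omega), hd,
                List.take_succ_cons]
            · intro q hq
              rcases List.mem_cons.mp hq with rfl | hq
              · exact hσmem hps
              · exact hAsub q hq
          by_cases h1 : σ s ∈ l₁
          · left
            have hAB : (l₁ ++ p :: l₂).erase (σ s) = l₁.erase (σ s) ++ p :: l₂ :=
              List.erase_append_left _ h1
            refine keep _ _ hAB ?_ ?_
            · have h3 : (l₁.erase (σ s)).length = l₁.length - 1 := List.length_erase_of_mem h1
              have h4 : 1 ≤ l₁.length := List.length_pos_iff.mpr (List.ne_nil_of_mem h1)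
              omega
            · intro q hq
              have := hnd.erase (σ s)
              have hq' : q ∈ l₁ := List.mem_of_mem_erase hq
              exact hmonoE (Nat.le_succ s) (hsub q hq')
          · by_cases h2 : σ s ∈ l₂
            · left
              have hAB : (l₁ ++ p :: l₂).erase (σ s) = l₁ ++ p :: l₂.erase (σ s) := by
                rw [List.erase_append_right _ h1, List.erase_cons_tail (by simpa using (Ne.symm hps))]
              refine keep _ _ hAB ?_ ?_
              · have : 1 ≤ l₂.length := List.length_pos_iff.mpr (List.ne_nil_of_mem h2)
                omega
              · intro q hq; exact hmonoE (Nat.le_succ s) (hsub q hq)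
            · -- σ s not in cache
              have hnotmem : σ s ∉ l₁ ++ p :: l₂ := by
                simp only [List.mem_append, List.mem_cons]
                push_neg
                exact ⟨h1, hps, h2⟩
              have hAB : (l₁ ++ p :: l₂).erase (σ s) = l₁ ++ p :: l₂ :=
                List.erase_of_not_mem hnotmem
              by_cases hfit : l₁.length + 1 < k
              · left
                exact keep _ _ hAB hfit (fun q hq => hmonoE (Nat.le_succ s) (hsub q hq))
              · -- p evicted: count k distinct pages
                right
                have hl1nd : l₁.Nodup := hnd.of_append_left
                have hσl1 : σ s ∉ l₁ := h1
                have hsubF : insert (σ s) l₁.toFinset ⊆ E (s + 1) := by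
                  intro q hq
                  rcases Finset.mem_insert.mp hq with rfl | hq
                  · exact hσmem hps
                  · exact hmonoE (Nat.le_succ s) (hsub q (List.mem_toFinset.mp hq))
                have hcardF : (insert (σ s) l₁.toFinset).card = l₁.length + 1 := by
                  rw [Finset.card_insert_of_notMem (by simpa using hσl1),
                    List.toFinset_card_of_nodup hl1nd]
                have := Finset.card_le_card hsubF
                omega
      · exact Or.inr (le_trans hcard (Finset.card_le_card (hmonoE (Nat.le_succ s))))
  rcases main b hab with ⟨l₁, l₂, hc, _⟩ | h
  · exact absurd (by rw [hc]; simp) hb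
  · exact h

lemma stmt3_aux (k : ℕ) (hk : 2 ≤ k) (σ : ℕ → ℕ) (t : Fin k → ℕ)
    (hmono : StrictMono t) (i0 il : Fin k) (h0 : (i0 : ℕ) = 0) (hl : (il : ℕ) = k - 1)
    (ht1 : 1 ≤ t i0)
    (hfaults : ∀ j, σ (t j) ∉ lruCache k σ (t j)) :
    k + 1 ≤ ((Finset.Icc (t i0 - 1) (t il)).image σ).card := by
  have hle : ∀ j, t i0 ≤ t j ∧ t j ≤ t il := by
    intro j
    have hj := j.isLt
    constructor <;> apply hmono.monotone <;> rw [Fin.le_def] <;> omega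
  have hmemW : ∀ s, t i0 - 1 ≤ s → s ≤ t il → σ s ∈ (Finset.Icc (t i0 - 1) (t il)).image σ := by
    intro s h1 h2
    exact Finset.mem_image.mpr ⟨s, Finset.mem_Icc.mpr ⟨h1, h2⟩, rfl⟩
  have count : ∀ (p a b : ℕ), a ≤ b → (∃ l, lruCache k σ a = p :: l) →
      p ∉ lruCache k σ b → p ∈ (Finset.Icc (t i0 - 1) (t il)).image σ →
      Finset.Ico a b ⊆ Finset.Icc (t i0 - 1) (t il) →
      k + 1 ≤ ((Finset.Icc (t i0 - 1) (t il)).image σ).card := by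
    intro p a b hab ha hb hpW hIco
    have hkey := lru_key k (by omega) σ p a b hab ha hb
    have hsub : insert p (((Finset.Ico a b).image σ).erase p)
        ⊆ (Finset.Icc (t i0 - 1) (t il)).image σ := by
      intro q hq
      rcases Finset.mem_insert.mp hq with rfl | hq
      · exact hpW
      · exact Finset.image_subset_image hIco (Finset.erase_subset _ _ hq)
    calc k + 1 ≤ (insert p (((Finset.Ico a b).image σ).erase p)).card := by
          rw [Finset.card_insert_of_notMem (Finset.notMem_erase _ _)]; omega
      _ ≤ _ := Finset.card_le_card hsub
  by_cases hrep : ∃ i j : Fin k, i < j ∧ σ (t i) = σ (t j)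
  · obtain ⟨i, j, hij, he⟩ := hrep
    refine count (σ (t i)) (t i + 1) (t j) (hmono hij) ⟨_, lruCache_succ k (by omega) σ (t i)⟩
      (he ▸ hfaults j) (hmemW _ (by have := (hle i).1; omega) (hle i).2) ?_
    intro x hx
    rw [Finset.mem_Ico] at hx
    rw [Finset.mem_Icc]
    have h1 := (hle i).1
    have h2 := (hle j).2
    omega
  · by_cases hq : ∃ j, σ (t i0 - 1) = σ (t j)
    · obtain ⟨j, he⟩ := hq
      have hstep : lruCache k σ (t i0) = σ (t i0 - 1) ::
          ((lruCache k σ (t i0 - 1)).erase (σ (t i0 - 1))).take (k - 1) := by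
        conv_lhs => rw [show t i0 = (t i0 - 1) + 1 by omega]
        exact lruCache_succ k (by omega) σ (t i0 - 1)
      refine count (σ (t i0 - 1)) (t i0) (t j) (hle j).1 ⟨_, hstep⟩
        (he ▸ hfaults j) (hmemW _ le_rfl (by have := (hle i0).2; omega)) ?_
      intro x hx
      rw [Finset.mem_Ico] at hx
      rw [Finset.mem_Icc]
      have h2 := (hle j).2
      omega
    · -- all k+1 pages distinct
      push_neg at hrep hq
      have hinj : Function.Injective (fun j : Fin k => σ (t j)) := by
        intro i j h
        by_contra hne
        rcases lt_or_gt_of_ne hne with h' | h'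
        · exact hrep i j h' h
        · exact hrep j i h' h.symm
      have hsub : insert (σ (t i0 - 1)) (Finset.univ.image (fun j : Fin k => σ (t j)))
          ⊆ (Finset.Icc (t i0 - 1) (t il)).image σ := by
        intro q hq'
        rcases Finset.mem_insert.mp hq' with rfl | hq'
        · exact hmemW _ le_rfl (by have := (hle i0).2; omega)
        · obtain ⟨j, -, rfl⟩ := Finset.mem_image.mp hq'
          exact hmemW _ (by have := (hle j).1; omega) (hle j).2
      have hnotmem : σ (t i0 - 1) ∉ Finset.univ.image (fun j : Fin k => σ (t j)) := by
        rw [Finset.mem_image]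
        rintro ⟨j, -, hj⟩
        exact hq j hj.symm
      calc k + 1 ≤ (insert (σ (t i0 - 1)) (Finset.univ.image (fun j : Fin k => σ (t j)))).card := by
            rw [Finset.card_insert_of_notMem hnotmem,
              Finset.card_image_of_injective _ hinj, Finset.card_univ, Fintype.card_fin]
        _ ≤ _ := Finset.card_le_card hsub

/-- **Claim in the proof of Theorem 1.1(b)**: if LRU (cache size `k ≥ 2`, empty initial
cache) faults at times `t 0 < t 1 < ⋯ < t (k-1)` and at no other time in between, the
first of these faults is not the very first request, and at least `k` distinct pages are
requested before time `t 0` (so the cache is full), then the requests at times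
`t 0 - 1, t 0, …, t (k-1)` are for at least `k + 1` distinct pages.
(Times are 0-based: the request at time `s` is `σ s`, and it is a fault when
`σ s ∉ lruCache k σ s`.) -/
theorem stmt3 (k : ℕ) (hk : 2 ≤ k) (σ : ℕ → ℕ) (t : Fin k → ℕ)
    (hmono : StrictMono t)
    (ht1 : 1 ≤ t ⟨0, by omega⟩)
    (hfull : k ≤ ((Finset.range (t ⟨0, by omega⟩)).image σ).card)
    (hfaults : ∀ j, σ (t j) ∉ lruCache k σ (t j))
    (honly : ∀ s, t ⟨0, by omega⟩ ≤ s → s ≤ t ⟨k - 1, by omega⟩ →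
      σ s ∉ lruCache k σ s → ∃ j, s = t j) :
    k + 1 ≤ ((Finset.Icc (t ⟨0, by omega⟩ - 1) (t ⟨k - 1, by omega⟩)).image σ).card := by
  exact stmt3_aux k hk σ t hmono ⟨0, by omega⟩ ⟨k - 1, by omega⟩ rfl rfl ht1 hfaults
end

section
/- Let σ be a page request sequence processed by the LRU policy with cache size k ≥ 1 starting from an empty cache. If LRU faults at two times s < t on requests for the same page (σ_s = σ_t), then the requests σ_s, σ_{s+1}, …, σ_t are for at least k+1 distinct pages. -/
/-!
LRU is a stack algorithm: with cache size `k` its cache is always the first `k` entries of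
the recency list of all pages requested so far (most recent first). Moreover, for `s ≤ t`,
if `m` distinct pages are requested in `[s, t)`, they are exactly the first `m` entries of
the recency list at time `t`. So if at most `k` distinct pages are requested in `[s, t]`,
the page `σ s` is still cached at time `t` and its request there is not a fault.
-/

open Finset

namespace List

variable {α : Type*} [DecidableEq α]

theorem take_erase_take_succ (p : α) :
    ∀ (L : List α) (n : ℕ), ((L.take (n + 1)).erase p).take n = (L.erase p).take n
  | [], _ => rfl
  | b :: L, n => by
    by_cases hb : b = p
    · simp [hb]
    · cases n with
      | zero => simp
      | succ n => simp [hb, take_erase_take_succ p L n]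

theorem take_erase_of_notMem_take {a : α} :
    ∀ {L : List α} {n : ℕ}, a ∉ L.take n → (L.erase a).take n = L.take n
  | [], _, _ => rfl
  | _ :: _, 0, _ => rfl
  | b :: L, n + 1, h => by
    simp only [take_succ_cons, mem_cons, not_or] at h
    simp [Ne.symm h.1, take_erase_of_notMem_take h.2]

theorem toFinset_take_cons_erase_of_mem_take {a : α} {L : List α} {m : ℕ}
    (h : a ∈ L.take m) : ((a :: L.erase a).take m).toFinset = (L.take m).toFinset := by
  obtain ⟨n, rfl⟩ : ∃ n, m = n + 1 := Nat.exists_eq_succ_of_ne_zero (by rintro rfl; simp at h)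
  have hlen : ((L.take (n + 1)).erase a).length ≤ n := by
    rw [length_erase_of_mem h, length_take]; omega
  rw [take_succ_cons, ← take_erase_take_succ, take_of_length_le hlen]
  exact toFinset_eq_of_perm _ _ (perm_cons_erase h).symm

theorem toFinset_take_succ_cons_erase_of_notMem_take {a : α} {L : List α} {m : ℕ}
    (h : a ∉ L.take m) :
    ((a :: L.erase a).take (m + 1)).toFinset = insert a (L.take m).toFinset := by
  rw [take_succ_cons, take_erase_of_notMem_take h, toFinset_cons]

end List

theorem lruStep_take (k : ℕ) (L : List ℕ) (p : ℕ) : lruStep k (L.take k) p = lruStep k L p := by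
  cases k with
  | zero => rfl
  | succ n => simp only [lruStep, List.take_succ_cons, List.take_erase_take_succ]

def lruStack (σ : ℕ → ℕ) : ℕ → List ℕ
  | 0 => []
  | t + 1 => σ t :: (lruStack σ t).erase (σ t)

theorem lruCache_eq_take_lruStack (k : ℕ) (σ : ℕ → ℕ) :
    ∀ t, lruCache k σ t = (lruStack σ t).take k
  | 0 => by simp [lruCache, lruStack]
  | t + 1 => by
    rw [lruCache, lruCache_eq_take_lruStack k σ t, lruStep_take]
    rfl

theorem toFinset_take_lruStack (σ : ℕ → ℕ) {s t : ℕ} (hst : s ≤ t) :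
    ((lruStack σ t).take ((Ico s t).image σ).card).toFinset = (Ico s t).image σ := by
  induction t, hst using Nat.le_induction with
  | base => simp
  | succ t hst ih =>
    rw [Nat.Ico_succ_right_eq_insert_Ico hst, image_insert, lruStack]
    by_cases hσt : σ t ∈ (Ico s t).image σ
    · have hmem : σ t ∈ (lruStack σ t).take ((Ico s t).image σ).card := by
        rwa [← List.mem_toFinset, ih]
      rw [insert_eq_of_mem hσt, List.toFinset_take_cons_erase_of_mem_take hmem, ih]
    · have hmem : σ t ∉ (lruStack σ t).take ((Ico s t).image σ).card := by
        rwa [← List.mem_toFinset, ih]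
      rw [card_insert_of_notMem hσt, List.toFinset_take_succ_cons_erase_of_notMem_take hmem, ih]

theorem mem_lruCache_of_card_image_Ico_le {k : ℕ} {σ : ℕ → ℕ} {s t : ℕ} (hst : s < t)
    (hcard : ((Ico s t).image σ).card ≤ k) : σ s ∈ lruCache k σ t := by
  have hmem : σ s ∈ (Ico s t).image σ := mem_image_of_mem σ (left_mem_Ico.2 hst)
  rw [← toFinset_take_lruStack σ hst.le, List.mem_toFinset] at hmem
  rw [lruCache_eq_take_lruStack]
  exact (List.take_sublist_take_left hcard).subset hmem

theorem stmt4_general (k : ℕ) (σ : ℕ → ℕ) (s t : ℕ) (hst : s < t)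
    (hpage : σ s = σ t)
    (hft : σ t ∉ lruCache k σ t) :
    k + 1 ≤ ((Finset.Icc s t).image σ).card := by
  by_contra! hcard
  have hIco : ((Ico s t).image σ).card ≤ k :=
    (card_le_card (image_subset_image Ico_subset_Icc_self)).trans (Nat.le_of_lt_succ hcard)
  exact hft (hpage ▸ mem_lruCache_of_card_image_Ico_le hst hIco)

/-- If LRU (cache size `k ≥ 1`, empty initial cache) faults at two times `s < t` on
requests for the same page, then the requests `σ s, σ (s+1), …, σ t` are for at least
`k + 1` distinct pages.  (Times are 0-based: the request at time `u` is `σ u`, and it is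
a fault when `σ u ∉ lruCache k σ u`.) -/
theorem stmt4 (k : ℕ) (hk : 1 ≤ k) (σ : ℕ → ℕ) (s t : ℕ) (hst : s < t)
    (hpage : σ s = σ t)
    (hfs : σ s ∉ lruCache k σ s) (hft : σ t ∉ lruCache k σ t) :
    k + 1 ≤ ((Finset.Icc s t).image σ).card :=
  stmt4_general k σ s t hst hpage hft
end

section
/- Let f : ℕ+ → ℕ+ be any function. Then there exists a nondecreasing function f' : ℕ+ → ℕ+ with f'(1) = 1 and f'(n+1) ∈ {f'(n), f'(n)+1} for all n ≥ 1, such that an infinite page request sequence conforms to f' if and only if it conforms to f. -/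
/-- An infinite page request sequence `σ` conforms to `f` if for every `n ≥ 1`, every
window of `n` consecutive requests contains requests for at most `f n` distinct pages. -/
def ConformsInf (f : ℕ → ℕ) (σ : ℕ → ℕ) : Prop :=
  ∀ s n : ℕ, 1 ≤ n → ((Finset.Ico s (s + n)).image σ).card ≤ f n

/-- **Exercise 1.2(a)**: for every `f : ℕ+ → ℕ+` there is a nondecreasing
`f' : ℕ+ → ℕ+` with `f' 1 = 1` and `f' (n+1) ∈ {f' n, f' n + 1}` for all `n ≥ 1`, such
that an infinite page request sequence conforms to `f'` if and only if it conforms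
to `f`. -/
theorem stmt10 (f : ℕ → ℕ) (hpos : ∀ n, 1 ≤ n → 1 ≤ f n) :
    ∃ f' : ℕ → ℕ,
      (∀ m n, 1 ≤ m → m ≤ n → f' m ≤ f' n) ∧
      (∀ n, 1 ≤ n → 1 ≤ f' n) ∧
      f' 1 = 1 ∧
      (∀ n, 1 ≤ n → f' (n + 1) = f' n ∨ f' (n + 1) = f' n + 1) ∧
      (∀ σ : ℕ → ℕ, ConformsInf f' σ ↔ ConformsInf f σ) := by
  classical
  set S : ℕ → Set ℕ := fun n =>
    {k | ∃ σ : ℕ → ℕ, ConformsInf f σ ∧ ∃ s, ((Finset.Ico s (s + n)).image σ).card = k}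
    with hS
  have hconst : ConformsInf f (fun _ => 0) := by
    intro s n hn
    have hne : (Finset.Ico s (s + n)).Nonempty := ⟨s, by simp; omega⟩
    rw [Finset.image_const hne]
    simpa using hpos n hn
  have hmem1 : ∀ n, 1 ≤ n → 1 ∈ S n := by
    intro n hn
    refine ⟨fun _ => 0, hconst, 0, ?_⟩
    have hne : (Finset.Ico 0 (0 + n)).Nonempty := ⟨0, by simp; omega⟩
    rw [Finset.image_const hne]; simp
  have hub : ∀ n, 1 ≤ n → ∀ k ∈ S n, k ≤ f n := by
    rintro n hn k ⟨σ, hσ, s, rfl⟩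
    exact hσ s n hn
  have hbdd : ∀ n, 1 ≤ n → BddAbove (S n) := fun n hn => ⟨f n, hub n hn⟩
  refine ⟨fun n => sSup (S n), ?_, ?_, ?_, ?_, ?_⟩
  · -- monotone
    intro m n hm hmn
    refine csSup_le ⟨1, hmem1 m hm⟩ ?_
    rintro k ⟨σ, hσ, s, rfl⟩
    have hsub : (Finset.Ico s (s + m)).image σ ⊆ (Finset.Ico s (s + n)).image σ :=
      Finset.image_subset_image (Finset.Ico_subset_Ico le_rfl (by omega))
    calc ((Finset.Ico s (s + m)).image σ).card
        ≤ ((Finset.Ico s (s + n)).image σ).card := Finset.card_le_card hsub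
      _ ≤ sSup (S n) := le_csSup (hbdd n (by omega)) ⟨σ, hσ, s, rfl⟩
  · -- positivity
    intro n hn
    exact le_csSup (hbdd n hn) (hmem1 n hn)
  · -- f' 1 = 1
    refine le_antisymm (csSup_le ⟨1, hmem1 1 le_rfl⟩ ?_) (le_csSup (hbdd 1 le_rfl) (hmem1 1 le_rfl))
    rintro k ⟨σ, hσ, s, rfl⟩
    have : Finset.Ico s (s + 1) = {s} := by simp
    rw [this]; simp
  · -- step
    intro n hn
    show sSup (S (n + 1)) = sSup (S n) ∨ sSup (S (n + 1)) = sSup (S n) + 1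
    have hmono : sSup (S n) ≤ sSup (S (n + 1)) := by
      refine csSup_le ⟨1, hmem1 n hn⟩ ?_
      rintro k ⟨σ, hσ, s, rfl⟩
      have hsub : (Finset.Ico s (s + n)).image σ ⊆ (Finset.Ico s (s + (n + 1))).image σ :=
        Finset.image_subset_image (Finset.Ico_subset_Ico le_rfl (by omega))
      exact le_trans (Finset.card_le_card hsub)
        (le_csSup (hbdd (n + 1) (by omega)) ⟨σ, hσ, s, rfl⟩)
    have hstep : sSup (S (n + 1)) ≤ sSup (S n) + 1 := by
      refine csSup_le ⟨1, hmem1 (n + 1) (by omega)⟩ ?_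
      rintro k ⟨σ, hσ, s, rfl⟩
      have hsub : (Finset.Ico s (s + (n + 1))).image σ ⊆
          insert (σ (s + n)) ((Finset.Ico s (s + n)).image σ) := by
        intro x hx
        simp only [Finset.mem_image, Finset.mem_Ico] at hx
        obtain ⟨i, ⟨h1, h2⟩, rfl⟩ := hx
        by_cases h : i = s + n
        · subst h; exact Finset.mem_insert_self _ _
        · exact Finset.mem_insert_of_mem (Finset.mem_image.2 ⟨i, by simp; omega, rfl⟩)
      calc ((Finset.Ico s (s + (n + 1))).image σ).card
          ≤ (insert (σ (s + n)) ((Finset.Ico s (s + n)).image σ)).card :=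
            Finset.card_le_card hsub
        _ ≤ ((Finset.Ico s (s + n)).image σ).card + 1 := Finset.card_insert_le _ _
        _ ≤ sSup (S n) + 1 := by
            exact Nat.add_le_add_right (le_csSup (hbdd n hn) ⟨σ, hσ, s, rfl⟩) 1
    omega
  · -- equivalence
    intro σ
    constructor
    · intro h s n hn
      exact le_trans (h s n hn) (csSup_le ⟨1, hmem1 n hn⟩ (hub n hn))
    · intro h s n hn
      exact le_csSup (hbdd n hn) ⟨σ, h, s, rfl⟩
end

section
/- Consider a knapsack instance with items indexed in nonincreasing order of density, v_1/s_1 ≥ v_2/s_2 ≥ ⋯ ≥ v_n/s_n, and suppose s_i ≤ C for every item i. Let α = (max_{1 ≤ i ≤ n} s_i)/C and let j be the largest index with s_1 + ⋯ + s_j ≤ C. Then v_1 + ⋯ + v_j ≥ (1 − α)·OPT. -/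
/-- **Exercise 1.6**: consider a knapsack instance with `n` items of nonnegative values
`v i`, positive sizes `s i` indexed in nonincreasing order of density `v i / s i`, and
capacity `C > 0`, with `s i ≤ C` for every item.  Let `α = (max_i s i) / C` and let `j`
be the largest index such that the first `j` items fit in the knapsack.  Then the total
value of the greedy solution `{0, …, j-1}` (0-based indexing) is at least `(1 - α)`
times the total value of any feasible solution `S`. -/
theorem stmt13 (n : ℕ) (hn : 0 < n) (v s : Fin n → ℝ) (C : ℝ) (hC : 0 < C)
    (hv : ∀ i, 0 ≤ v i) (hs : ∀ i, 0 < s i) (hsC : ∀ i, s i ≤ C)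
    (hdens : ∀ i j : Fin n, i ≤ j → v j / s j ≤ v i / s i)
    (j : ℕ) (hjn : j ≤ n)
    (hfeas : ∑ i ∈ Finset.univ.filter (fun i : Fin n => (i : ℕ) < j), s i ≤ C)
    (hlargest : ∀ j', j' ≤ n →
      (∑ i ∈ Finset.univ.filter (fun i : Fin n => (i : ℕ) < j'), s i ≤ C) → j' ≤ j)
    (α : ℝ) (hα : α = (⨆ i, s i) / C)
    (S : Finset (Fin n)) (hS : ∑ i ∈ S, s i ≤ C) :
    (1 - α) * ∑ i ∈ S, v i ≤
      ∑ i ∈ Finset.univ.filter (fun i : Fin n => (i : ℕ) < j), v i := by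
  have hne : Nonempty (Fin n) := ⟨⟨0, hn⟩⟩
  set G : Finset (Fin n) := Finset.univ.filter (fun i : Fin n => (i : ℕ) < j) with hG
  have hbdd : BddAbove (Set.range s) := (Set.finite_range s).bddAbove
  have hα0 : 0 ≤ α := by
    rw [hα]
    exact div_nonneg (le_trans (hs ⟨0, hn⟩).le (le_ciSup hbdd _)) hC.le
  have hα1 : α ≤ 1 := by
    rw [hα, div_le_one hC]
    exact ciSup_le hsC
  have hSv : 0 ≤ ∑ i ∈ S, v i := Finset.sum_nonneg fun i _ => hv i
  rcases eq_or_lt_of_le hjn with rfl | hjlt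
  · have hGuniv : G = Finset.univ := by
      ext i; simp [hG, i.isLt]
    have h1 : ∑ i ∈ S, v i ≤ ∑ i ∈ G, v i := by
      rw [hGuniv]
      exact Finset.sum_le_sum_of_subset_of_nonneg (Finset.subset_univ S) fun i _ _ => hv i
    nlinarith
  · set jF : Fin n := ⟨j, hjlt⟩ with hjF
    set ρ : ℝ := v jF / s jF with hρ
    have hρ0 : 0 ≤ ρ := div_nonneg (hv jF) (hs jF).le
    have hjG : jF ∉ G := by simp [hG, hjF]
    have hbig : C < ∑ i ∈ Finset.univ.filter (fun i : Fin n => (i : ℕ) < j + 1), s i := by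
      by_contra h
      push_neg at h
      have := hlargest (j + 1) hjlt h
      omega
    have hsplitset : Finset.univ.filter (fun i : Fin n => (i : ℕ) < j + 1) = insert jF G := by
      ext i
      simp only [Finset.mem_filter, Finset.mem_univ, true_and, Finset.mem_insert, hG, hjF,
        Fin.ext_iff]
      omega
    have hsplit : ∑ i ∈ Finset.univ.filter (fun i : Fin n => (i : ℕ) < j + 1), s i
        = s jF + ∑ i ∈ G, s i := by
      rw [hsplitset, Finset.sum_insert hjG]
    have hsup : s jF ≤ α * C := by
      rw [hα, div_mul_cancel₀ _ hC.ne']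
      exact le_ciSup hbdd jF
    have hT : C - α * C ≤ ∑ i ∈ G, s i := by
      rw [hsplit] at hbig
      linarith
    have hGlow : ρ * (∑ i ∈ G, s i) ≤ ∑ i ∈ G, v i := by
      rw [Finset.mul_sum]
      apply Finset.sum_le_sum
      intro i hi
      have hij : i ≤ jF := by
        simp only [hG, Finset.mem_filter] at hi
        exact Fin.le_def.mpr (le_of_lt hi.2)
      have := hdens i jF hij
      rw [← hρ] at this
      exact (le_div_iff₀ (hs i)).mp this
    have hdiffhigh : ∑ i ∈ S \ G, v i ≤ ρ * ∑ i ∈ S \ G, s i := by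
      rw [Finset.mul_sum]
      apply Finset.sum_le_sum
      intro i hi
      have hij : jF ≤ i := by
        simp only [hG, Finset.mem_sdiff, Finset.mem_filter, Finset.mem_univ, true_and] at hi
        exact Fin.le_def.mpr (le_of_not_gt hi.2)
      have := hdens jF i hij
      rw [← hρ] at this
      exact (div_le_iff₀ (hs i)).mp this
    have hdifflow : ρ * ∑ i ∈ G \ S, s i ≤ ∑ i ∈ G \ S, v i := by
      rw [Finset.mul_sum]
      apply Finset.sum_le_sum
      intro i hi
      have hij : i ≤ jF := by
        simp only [hG, Finset.mem_sdiff, Finset.mem_filter, Finset.mem_univ, true_and] at hi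
        exact Fin.le_def.mpr (le_of_lt hi.1)
      have := hdens i jF hij
      rw [← hρ] at this
      exact (le_div_iff₀ (hs i)).mp this
    have ev1 : ∑ i ∈ S ∩ G, v i + ∑ i ∈ S \ G, v i = ∑ i ∈ S, v i :=
      Finset.sum_inter_add_sum_sdiff S G v
    have ev2 : ∑ i ∈ G ∩ S, v i + ∑ i ∈ G \ S, v i = ∑ i ∈ G, v i :=
      Finset.sum_inter_add_sum_sdiff G S v
    have es1 : ∑ i ∈ S ∩ G, s i + ∑ i ∈ S \ G, s i = ∑ i ∈ S, s i :=
      Finset.sum_inter_add_sum_sdiff S G s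
    have es2 : ∑ i ∈ G ∩ S, s i + ∑ i ∈ G \ S, s i = ∑ i ∈ G, s i :=
      Finset.sum_inter_add_sum_sdiff G S s
    have hcv : ∑ i ∈ G ∩ S, v i = ∑ i ∈ S ∩ G, v i := by rw [Finset.inter_comm]
    have hcs : ∑ i ∈ G ∩ S, s i = ∑ i ∈ S ∩ G, s i := by rw [Finset.inter_comm]
    have key : ∑ i ∈ S, v i ≤ ∑ i ∈ G, v i + ρ * (C - ∑ i ∈ G, s i) := by
      have h4 : ρ * (∑ i ∈ S, s i) ≤ ρ * C := mul_le_mul_of_nonneg_left hS hρ0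
      have h5 : ρ * (∑ i ∈ S ∩ G, s i) + ρ * (∑ i ∈ S \ G, s i) = ρ * ∑ i ∈ S, s i := by
        rw [← mul_add, es1]
      have h6 : ρ * (∑ i ∈ G ∩ S, s i) + ρ * (∑ i ∈ G \ S, s i) = ρ * ∑ i ∈ G, s i := by
        rw [← mul_add, es2]
      have h7 : ρ * (∑ i ∈ G ∩ S, s i) = ρ * ∑ i ∈ S ∩ G, s i := by rw [hcs]
      linarith
    have hGv0 : 0 ≤ ∑ i ∈ G, v i := Finset.sum_nonneg fun i _ => hv i
    nlinarith [mul_le_mul_of_nonneg_left hT (mul_nonneg hα0 hρ0),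
      mul_le_mul_of_nonneg_left hSv hα0,
      mul_le_mul_of_nonneg_left key (by linarith : (0:ℝ) ≤ 1 - α),
      mul_nonneg (mul_nonneg hρ0 hα0) (by linarith : (0:ℝ) ≤ 1 - α)]
end

section
/- Suppose there exist a unit vector w* and a real number μ > 0 with b_i·⟨w*, x_i⟩ ≥ μ for every i ∈ {1, …, n}. Then every run w_1, w_2, …, w_{T+1} of the perceptron algorithm makes at most 1/μ² updates; that is, T ≤ 1/μ². -/
open scoped RealInnerProductSpace

/-- **Exercise 1.7(c)**: suppose there exist a unit vector `wstar` and `μ > 0` with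
`b i * ⟪wstar, x i⟫ ≥ μ` for every `i`.  Then every run `w 1, …, w (T+1)` of the
perceptron algorithm on unit vectors `x 0, …, x (n-1)` with labels `b i ∈ {-1, +1}` —
i.e. `w 1 = 0` and at each step `t ∈ {1, …, T}` an index `idx t` with
`b (idx t) * ⟪w t, x (idx t)⟫ ≤ 0` (a point misclassified by `w t`) is chosen and
`w (t+1) = w t + b (idx t) • x (idx t)` — makes at most `1/μ²` updates: `T ≤ 1/μ²`. -/
theorem stmt16 {E : Type*} [NormedAddCommGroup E] [InnerProductSpace ℝ E]
    (n : ℕ) (x : Fin n → E) (b : Fin n → ℝ)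
    (hx : ∀ i, ‖x i‖ = 1) (hb : ∀ i, b i = 1 ∨ b i = -1)
    (wstar : E) (hwstar : ‖wstar‖ = 1) (μ : ℝ) (hμ : 0 < μ)
    (hmargin : ∀ i, μ ≤ b i * ⟪wstar, x i⟫)
    (T : ℕ) (w : ℕ → E) (idx : ℕ → Fin n)
    (hw1 : w 1 = 0)
    (hstep : ∀ t, 1 ≤ t → t ≤ T → w (t + 1) = w t + b (idx t) • x (idx t))
    (hmis : ∀ t, 1 ≤ t → t ≤ T → b (idx t) * ⟪w t, x (idx t)⟫ ≤ 0) :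
    (T : ℝ) ≤ 1 / μ ^ 2 := by
  have key : ∀ t, 1 ≤ t → t ≤ T + 1 →
      ((t : ℝ) - 1) * μ ≤ ⟪wstar, w t⟫ ∧ ‖w t‖ ^ 2 ≤ (t : ℝ) - 1 := by
    intro t ht1
    induction t, ht1 using Nat.le_induction with
    | base => intro _; simp [hw1]
    | succ t ht1 ih =>
      intro hle
      have htT : t ≤ T := by omega
      obtain ⟨ih1, ih2⟩ := ih (by omega)
      have hbsq : b (idx t) ^ 2 = 1 := by rcases hb (idx t) with h | h <;> rw [h] <;> ring
      have hs := hstep t ht1 htT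
      constructor
      · rw [hs, inner_add_right, real_inner_smul_right]
        have := hmargin (idx t)
        push_cast
        nlinarith
      · rw [hs]
        have hnorm : ‖w t + b (idx t) • x (idx t)‖ ^ 2 =
            ‖w t‖ ^ 2 + 2 * (b (idx t) * ⟪w t, x (idx t)⟫) + b (idx t) ^ 2 * ‖x (idx t)‖ ^ 2 := by
          rw [norm_add_sq_real, real_inner_smul_right, norm_smul]
          simp [mul_pow, sq_abs]
        rw [hnorm, hbsq, hx (idx t)]
        have := hmis t ht1 htT
        push_cast
        nlinarith
  obtain ⟨h1, h2⟩ := key (T + 1) (by omega) le_rfl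
  push_cast at h1 h2
  simp only [add_sub_cancel_right] at h1 h2
  have hcs : ⟪wstar, w (T + 1)⟫ ≤ ‖w (T + 1)‖ := by
    calc ⟪wstar, w (T + 1)⟫ ≤ ‖wstar‖ * ‖w (T + 1)‖ := real_inner_le_norm _ _
    _ = ‖w (T + 1)‖ := by rw [hwstar, one_mul]
  have hn : 0 ≤ ‖w (T + 1)‖ := norm_nonneg _
  rw [le_div_iff₀ (by positivity)]
  have hT0 : (0:ℝ) ≤ (T:ℝ) := Nat.cast_nonneg T
  have hTw : (T:ℝ) * μ ≤ ‖w (T + 1)‖ := le_trans h1 hcs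
  have hsq : ((T:ℝ) * μ) ^ 2 ≤ ‖w (T + 1)‖ ^ 2 :=
    pow_le_pow_left₀ (mul_nonneg hT0 hμ.le) hTw 2
  rcases eq_or_lt_of_le hT0 with h | h
  · nlinarith
  · have : (T:ℝ) * ((T:ℝ) * μ ^ 2) ≤ (T:ℝ) * 1 := by nlinarith
    exact le_of_mul_le_mul_left this h
end
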